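/- Let T be a bounded linear operator on L² induced by a K⁰-kernel 𝐓, and define the iterated kernels 𝐓^[1] = 𝐓 and, for n ≥ 2, 𝐓^[n](s,t) = ⟨T^{n−2}(𝐭′(t)), 𝐭(s)⟩ (which equals the (n−1)-fold iterated integral ∫⋯∫ 𝐓(s,ξ₁)⋯𝐓(ξ_{n−1},t) dξ₁⋯dξ_{n−1}). If λ ∈ ℂ satisfies |λ| < 1 / lim_{n→∞} ‖Tⁿ‖^{1/n}, then λ is a regular value for T and the Neumann series Σ_{n=1}^∞ λ^{n−1} 𝐓^[n] converges in the supremum norm on ℝ² to the resolvent kernel 𝐓_{|λ}, where 𝐓_{|λ}(s,t) = λ⟨R_λ(T)(𝐭′(t)), 𝐭(s)⟩ + 𝐓(s,t). -/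

import Mathlib

open MeasureTheory Filter Topology ContinuousLinearMap
open scoped ENNReal NNReal

noncomputable section

/-- `L²(ℝ)`, the complex Hilbert space of square-integrable functions on `ℝ`. -/
abbrev L2 : Type := MeasureTheory.Lp ℂ 2 (MeasureTheory.volume : MeasureTheory.Measure ℝ)

/-- Bounded linear operators on `L²`. -/
abbrev L2op : Type := L2 →L[ℂ] L2

/-- `T` is the integral operator induced by the kernel `K`:
`(Tf)(s) = ∫ K(s,t) f(t) dt` for every `f ∈ L²` and almost every `s`. -/
def IsInducedBy (T : L2op) (K : ℝ → ℝ → ℂ) : Prop :=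
  ∀ f : L2, ∀ᵐ s : ℝ, (T f : ℝ → ℂ) s = ∫ t : ℝ, K s t * (f : ℝ → ℂ) t

/-- `K` is a `K⁰`-kernel with associated Carleman functions `kt`, `kt'`:
`kt s = conj (K s ·)` and `kt' s = K · s` as elements of `L²`, the kernel is
continuous and vanishes at infinity, and both Carleman functions are continuous
and vanish at infinity in `L²`-norm. -/
structure IsK0Kernel (K : ℝ → ℝ → ℂ) (kt kt' : ℝ → L2) : Prop where
  repr_t : ∀ s : ℝ, (kt s : ℝ → ℂ) =ᵐ[volume] fun x => (starRingEnd ℂ) (K s x)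
  repr_t' : ∀ s : ℝ, (kt' s : ℝ → ℂ) =ᵐ[volume] fun x => K x s
  cont : Continuous fun p : ℝ × ℝ => K p.1 p.2
  vanish : Tendsto (fun p : ℝ × ℝ => K p.1 p.2) (cocompact (ℝ × ℝ)) (𝓝 0)
  cont_t : Continuous kt
  vanish_t : Tendsto kt (cocompact ℝ) (𝓝 0)
  cont_t' : Continuous kt'
  vanish_t' : Tendsto kt' (cocompact ℝ) (𝓝 0)

/-- The set `Π(T)` of regular values of `T`: those `λ` for which `I - λT` is invertible. -/
def regularSet (T : L2op) : Set ℂ := {lam : ℂ | IsUnit (1 - lam • T)}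

/-- The resolvent `R_λ(T) = (I - λT)⁻¹` (junk value `0` if `λ ∉ Π(T)`). -/
def res (T : L2op) (lam : ℂ) : L2op := Ring.inverse (1 - lam • T)

/-- The Fredholm resolvent `T_{|λ} = T R_λ(T)`. -/
def fres (T : L2op) (lam : ℂ) : L2op := T * res T lam

/-- The region of boundedness `∇_b({Sₙ})`. -/
def nablaB (S : ℕ → L2op) : Set ℂ :=
  {ζ : ℂ | ζ ≠ 0 ∧ ∃ M : ℝ, 0 < M ∧ ∃ N : ℕ, ∀ n > N,
      ζ ∈ regularSet (S n) ∧ ‖fres (S n) ζ‖ ≤ M}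

/-- The region of strong convergence `∇_s({Sₙ})`: the `ζ ∈ ∇_b({Sₙ})` such that
the Fredholm resolvents `S_{n|ζ}` converge in the strong operator topology. -/
def nablaS (S : ℕ → L2op) : Set ℂ :=
  {ζ : ℂ | ζ ∈ nablaB S ∧
    ∀ f : L2, ∃ g : L2, Tendsto (fun n => fres (S n) ζ f) atTop (𝓝 g)}

/-- Nuclear (trace class) operator on `L²`. -/
def IsNuclear (T : L2op) : Prop :=
  ∃ g h : ℕ → L2, Summable (fun k => ‖g k‖ * ‖h k‖) ∧
    ∀ f : L2, T f = ∑' k : ℕ, (inner ℂ f (g k) : ℂ) • h k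

/-- The characteristic function `χ` of the interval `(-τ, τ)`, with complex values. -/
def chi (t : ℝ) (x : ℝ) : ℂ := Set.indicator (Set.Ioo (-t) t) 1 x

/-- Condition (iv) for a `K⁰`-kernel `K` inducing `T`: the positive reals `τ n`
strictly increase to `+∞`, `P n` is the orthogonal projection given by multiplication
by `χₙ = chi (τ n)`, the subkernels `Kₙ(s,t) = χₙ(s)K(s,t)` and
`K̃ₙ(s,t) = χₙ(s)K(s,t)χₙ(t)` are `K⁰`-kernels, and the induced operators
`Tₙ = PₙT` and `T̃ₙ = PₙTPₙ` are nuclear. -/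
structure ConditionIV (K : ℝ → ℝ → ℂ) (T : L2op) (tau : ℕ → ℝ) (P : ℕ → L2op) : Prop where
  pos : ∀ n, 0 < tau n
  mono : StrictMono tau
  tendsto_top : Tendsto tau atTop atTop
  proj : ∀ n, ∀ f : L2, (P n f : ℝ → ℂ) =ᵐ[volume] fun x => chi (tau n) x * (f : ℝ → ℂ) x
  subker : ∀ n, ∃ kt kt' : ℝ → L2, IsK0Kernel (fun s t => chi (tau n) s * K s t) kt kt'
  subker' : ∀ n, ∃ kt kt' : ℝ → L2,
      IsK0Kernel (fun s t => chi (tau n) s * K s t * chi (tau n) t) kt kt'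
  nuclear : ∀ n, IsNuclear (P n * T)
  nuclear' : ∀ n, IsNuclear (P n * T * P n)

/-- `λₙ(λ) = λ(1 - βₙλ)⁻¹`. -/
def lamn (b : ℕ → ℂ) (lam : ℂ) (n : ℕ) : ℂ := lam * (1 - b n * lam)⁻¹

/-- The resolvent kernel for `K` at `λ` built from the resolvent Carleman function
`𝐭'_{|λ}(t) = R_λ(T)(kt' t)`:  `𝐓_{|λ}(s,t) = λ⟨𝐭'_{|λ}(t), 𝐭(s)⟩ + 𝐓(s,t)`
(the paper's inner product `⟨a,b⟩ = ∫ a conj b` is `inner b a` in Mathlib). -/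
def resKer (T : L2op) (K : ℝ → ℝ → ℂ) (kt kt' : ℝ → L2) (lam : ℂ) (s t : ℝ) : ℂ :=
  lam * (inner ℂ (kt s) (res T lam (kt' t)) : ℂ) + K s t

/-- The resolvent kernel for the subkernel `Kₙ` at `λ`:
`𝐓_{n|λ}(s,t) = λ χₙ(s) ⟨𝐭'_{n|λ}(t), 𝐭(s)⟩ + 𝐓ₙ(s,t)`, where
`𝐭'_{n|λ}(t) = R_λ(Tₙ) Pₙ (kt' t)` and `𝐓ₙ(s,t) = χₙ(s) 𝐓(s,t)`. -/
def resKerN (T : L2op) (K : ℝ → ℝ → ℂ) (kt kt' : ℝ → L2) (taun : ℝ) (Pn : L2op)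
    (lam : ℂ) (s t : ℝ) : ℂ :=
  lam * chi taun s * (inner ℂ (kt s) (res (Pn * T) lam (Pn (kt' t))) : ℂ) + chi taun s * K s t

/-- `R` is a resolvent kernel for the `K⁰`-kernel `K` at `λ` (Definition 2 of the paper):
`R` is a `K⁰`-kernel satisfying the two simultaneous integral equations and the
square-integrability condition. -/
def IsResolventKernel (K : ℝ → ℝ → ℂ) (lam : ℂ) (R : ℝ → ℝ → ℂ) : Prop :=
  (∃ rt rt' : ℝ → L2, IsK0Kernel R rt rt') ∧
  (∀ s t : ℝ, R s t - lam * ∫ x : ℝ, K s x * R x t = K s t) ∧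
  (∀ s t : ℝ, R s t - lam * ∫ x : ℝ, R s x * K x t = K s t) ∧
  (∀ f : L2, ∫⁻ s : ℝ, ((‖∫ t : ℝ, R s t * (f : ℝ → ℂ) t‖₊ : ℝ≥0) : ℝ≥0∞) ^ 2 < ⊤)

/-- The iterated kernels: `𝐓^[1] = 𝐓` and, for `n ≥ 2`,
`𝐓^[n](s,t) = ⟨T^(n-2)(𝐭'(t)), 𝐭(s)⟩` (paper inner product). -/
def iterK (T : L2op) (K : ℝ → ℝ → ℂ) (kt kt' : ℝ → L2) (n : ℕ) (s t : ℝ) : ℂ :=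
  if n = 1 then K s t else (inner ℂ (kt s) ((T ^ (n - 2)) (kt' t)) : ℂ)

/-!
For `‖λ‖ r < 1` the root test makes the Neumann series `∑ (λT)ⁿ` converge in operator norm,
so `I - λT` is invertible with inverse `R_λ(T)` equal to that sum. Since
`𝐓^[n+2](s,t) = ⟨Tⁿ 𝐭'(t), 𝐭(s)⟩`, the partial sums of the kernel series differ from
`𝐓_{|λ}(s,t)` by `λ⟨(S_N - R_λ(T)) 𝐭'(t), 𝐭(s)⟩`, where `S_N` is the `N`-th partial sum of the
Neumann series. The Carleman functions are continuous and vanish at infinity, hence bounded,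
so this error is at most `‖λ‖ · sup ‖𝐭‖ · sup ‖𝐭'‖ · ‖S_N - R_λ(T)‖` uniformly in `(s,t)`.
-/

theorem exists_norm_le_of_tendsto_cocompact {X E : Type*} [TopologicalSpace X]
    [SeminormedAddCommGroup E] {f : X → E} (hc : Continuous f)
    (hv : Tendsto f (cocompact X) (𝓝 0)) : ∃ C, ∀ x, ‖f x‖ ≤ C := by
  obtain ⟨C, hC⟩ := (ZeroAtInftyContinuousMap.isBounded_range ⟨⟨f, hc⟩, hv⟩).exists_norm_le
  exact ⟨C, fun x => hC _ ⟨x, rfl⟩⟩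

theorem summable_pow_smul_of_tendsto_norm_pow_rpow {𝕜 R : Type*} [NormedField 𝕜]
    [NormedRing R] [NormedAlgebra 𝕜 R] [CompleteSpace R] {a : R} {r : ℝ}
    (hr : Tendsto (fun n : ℕ => ‖a ^ n‖ ^ ((n : ℝ)⁻¹)) atTop (𝓝 r)) {z : 𝕜}
    (hz : ‖z‖ * r < 1) : Summable fun n : ℕ => (z • a) ^ n := by
  obtain ⟨c, hzc, hc1⟩ := exists_between hz
  have hc0 : 0 ≤ c := (mul_nonneg (norm_nonneg z)
    (ge_of_tendsto' hr fun n => Real.rpow_nonneg (norm_nonneg _) _)).trans hzc.le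
  refine .of_norm_bounded_eventually_nat (summable_geometric_of_lt_one hc0 hc1) ?_
  filter_upwards [(hr.const_mul ‖z‖).eventually_lt_const hzc, eventually_ne_atTop 0]
    with n hn hn0
  calc ‖(z • a) ^ n‖ = ‖z‖ ^ n * ‖a ^ n‖ := by rw [smul_pow, norm_smul, norm_pow]
    _ = (‖z‖ * ‖a ^ n‖ ^ ((n : ℝ)⁻¹)) ^ n := by
      rw [mul_pow, Real.rpow_inv_natCast_pow (norm_nonneg _) hn0]
    _ ≤ c ^ n := by gcongr

theorem isUnit_one_sub_and_inverse_eq_tsum_pow {R : Type*} [Ring R] [TopologicalSpace R]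
    [IsTopologicalRing R] [T2Space R] {a : R} (h : Summable (a ^ ·)) :
    IsUnit (1 - a) ∧ Ring.inverse (1 - a) = ∑' n, a ^ n :=
  let u : Rˣ := ⟨1 - a, ∑' n, a ^ n, h.one_sub_mul_tsum_pow, h.tsum_pow_mul_one_sub⟩
  ⟨u.isUnit, Ring.inverse_unit u⟩

theorem tendsto_iSup_norm_zero_of_norm_le {ι E : Type*} [Nonempty ι] [SeminormedAddCommGroup E]
    {F : ℕ → ι → E} {b : ℕ → ℝ} (hF : ∀ N i, ‖F N i‖ ≤ b N)
    (hb : Tendsto b atTop (𝓝 0)) : Tendsto (fun N => ⨆ i, ‖F N i‖) atTop (𝓝 0) := by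
  refine squeeze_zero (fun N => ?_) (fun N => ciSup_le (hF N)) hb
  have hbdd : BddAbove (Set.range fun i => ‖F N i‖) := ⟨b N, Set.forall_mem_range.2 (hF N)⟩
  exact (norm_nonneg _).trans (le_ciSup hbdd (Classical.arbitrary ι))

theorem sum_range_succ_pow_mul_iterK (T : L2op) (K : ℝ → ℝ → ℂ) (kt kt' : ℝ → L2)
    (lam : ℂ) (N : ℕ) (s t : ℝ) :
    ∑ n ∈ Finset.range (N + 1), lam ^ n * iterK T K kt kt' (n + 1) s t
      = lam * inner ℂ (kt s) ((∑ k ∈ Finset.range N, (lam • T) ^ k) (kt' t)) + K s t := by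
  rw [Finset.sum_range_succ', sum_apply, inner_sum, Finset.mul_sum]
  simp [iterK, smul_pow, inner_smul_right, pow_succ, mul_assoc, mul_comm]

theorem norm_sum_pow_mul_iterK_sub_resKer_le (T : L2op) (K : ℝ → ℝ → ℂ) (kt kt' : ℝ → L2)
    (lam : ℂ) (N : ℕ) (s t : ℝ) :
    ‖∑ n ∈ Finset.range (N + 1), lam ^ n * iterK T K kt kt' (n + 1) s t
        - resKer T K kt kt' lam s t‖
      ≤ ‖lam‖ * ‖kt s‖ * ‖kt' t‖ * ‖∑ k ∈ Finset.range N, (lam • T) ^ k - res T lam‖ := by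
  rw [sum_range_succ_pow_mul_iterK, resKer, add_sub_add_right_eq_sub, ← mul_sub,
    ← inner_sub_right, ← sub_apply, norm_mul]
  calc ‖lam‖ * ‖inner ℂ (kt s) ((∑ k ∈ Finset.range N, (lam • T) ^ k - res T lam) (kt' t))‖
      ≤ ‖lam‖ * (‖kt s‖ * (‖∑ k ∈ Finset.range N, (lam • T) ^ k - res T lam‖ * ‖kt' t‖)) := by
        gcongr
        exact (norm_inner_le_norm _ _).trans (by gcongr; exact le_opNorm _ _)
    _ = _ := by ring

theorem statement18_general (T : L2op) (K : ℝ → ℝ → ℂ) (kt kt' : ℝ → L2)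
    (hK : IsK0Kernel K kt kt')
    (lam : ℂ) (r : ℝ)
    (hr : Tendsto (fun n : ℕ => ‖T ^ n‖ ^ ((n : ℝ)⁻¹)) atTop (𝓝 r))
    (hlam : ‖lam‖ * r < 1) :
    lam ∈ regularSet T ∧
    Tendsto (fun N : ℕ => ⨆ p : ℝ × ℝ,
        ‖(∑ n ∈ Finset.range N, lam ^ n * iterK T K kt kt' (n + 1) p.1 p.2)
          - resKer T K kt kt' lam p.1 p.2‖)
      atTop (𝓝 (0 : ℝ)) := by
  have hsum := summable_pow_smul_of_tendsto_norm_pow_rpow hr hlam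
  obtain ⟨hunit, hres⟩ := isUnit_one_sub_and_inverse_eq_tsum_pow hsum
  refine ⟨hunit, ?_⟩
  obtain ⟨C, hC⟩ := exists_norm_le_of_tendsto_cocompact hK.cont_t hK.vanish_t
  obtain ⟨C', hC'⟩ := exists_norm_le_of_tendsto_cocompact hK.cont_t' hK.vanish_t'
  have htail : Tendsto (fun N => ‖∑ k ∈ Finset.range N, (lam • T) ^ k - res T lam‖)
      atTop (𝓝 0) := by
    rw [res, hres]
    exact tendsto_iff_norm_sub_tendsto_zero.mp hsum.hasSum.tendsto_sum_nat
  rw [← tendsto_add_atTop_iff_nat 1]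
  refine tendsto_iSup_norm_zero_of_norm_le (fun N p => ?_)
    (by simpa using htail.const_mul (‖lam‖ * C * C'))
  refine (norm_sum_pow_mul_iterK_sub_resKer_le T K kt kt' lam N p.1 p.2).trans ?_
  gcongr
  · exact mul_nonneg (norm_nonneg lam) ((norm_nonneg _).trans (hC p.1))
  · exact hC p.1
  · exact hC' p.2

theorem statement18 (T : L2op) (K : ℝ → ℝ → ℂ) (kt kt' : ℝ → L2)
    (hK : IsK0Kernel K kt kt') (hT : IsInducedBy T K)
    (lam : ℂ) (r : ℝ)
    (hr : Tendsto (fun n : ℕ => ‖T ^ n‖ ^ ((n : ℝ)⁻¹)) atTop (𝓝 r))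
    (hlam : ‖lam‖ * r < 1) :
    lam ∈ regularSet T ∧
    Tendsto (fun N : ℕ => ⨆ p : ℝ × ℝ,
        ‖(∑ n ∈ Finset.range N, lam ^ n * iterK T K kt kt' (n + 1) p.1 p.2)
          - resKer T K kt kt' lam p.1 p.2‖)
      atTop (𝓝 (0 : ℝ)) :=
  statement18_general T K kt kt' hK lam r hr hlam
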